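/- Let M ≥ 1, let N = n₁ + ... + n_M, and equip ℝ^N with the graded group operation z = x·y of a Carnot group written in exponential coordinates: z_i = x_i + y_i for degree-1 coordinates, and z_i = x_i + y_i + P_i(x,y) for coordinates of degree k ≥ 2, where P_i is a polynomial each of whose monomials x^μ y^β satisfies |μ|_h + |β|_h = k with μ, β > 0 (|·|_h the homogeneous norm of the multi-index). Then for the quasimetric d₂(x, x·z) := max_k |π_k(z)|^{1/k} there exist constants C < ∞ and r₀ > 0 such that d₂(0, x·z) ≤ r + C·ξ whenever d₂(0,x) ≤ r, d₂(x, x·z) ≤ ξ, and r, ξ ≤ r₀. Equivalently, the union of d₂-balls of radius ξ centered at points of the ball of radius r is contained in the ball of radius r + Cξ. -/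

import Mathlib

/-!
Write `x · z = x + z + P(x, z)`. On the balls `d₂(0, x) ≤ r`, `d₂(0, z) ≤ ξ` every coordinate
satisfies `|x_j| ≤ r^{deg j}`, `|z_j| ≤ ξ^{deg j}`, so a monomial `x^μ z^β` of `P` in degree `k`
is at most `r^a ξ^b ≤ ξ (r + ξ)^{k-1}` (`a + b = k`, `b ≥ 1`). With `K` the total size of the
coefficients, the degree-`k` block of `x · z` is therefore at most
`r^k + ξ^k + K ξ (r + ξ)^{k-1} ≤ (r + (K + 1) ξ)^k`, i.e. `d₂(0, x · z) ≤ r + (K + 1) ξ`.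
-/

/-- The Euclidean norm of the block of coordinates of homogeneous degree `k`. -/
noncomputable def blockNorm {N : ℕ} (deg : Fin N → ℕ) (k : ℕ) (x : Fin N → ℝ) : ℝ :=
  Real.sqrt (∑ i ∈ Finset.univ.filter (fun i => deg i = k), (x i) ^ 2)

/-- The homogeneous quasimetric `d₂` on the graded model `ℝ^N`. -/
noncomputable def d2 {N : ℕ} (M : ℕ) (hM : 1 ≤ M) (deg : Fin N → ℕ)
    (x y : Fin N → ℝ) : ℝ :=
  (Finset.Icc 1 M).sup' (Finset.nonempty_Icc.mpr hM)
    (fun k => blockNorm deg k (x - y) ^ ((1 : ℝ) / k))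

section BlockNorm

variable {N : ℕ} (deg : Fin N → ℕ) (k : ℕ)

/-- The projection `π_k`, landing in `EuclideanSpace` so that `blockNorm` is a genuine norm. -/
noncomputable def blockProj : (Fin N → ℝ) →ₗ[ℝ] EuclideanSpace ℝ (Fin N) :=
  (WithLp.linearEquiv 2 ℝ (Fin N → ℝ)).symm.toLinearMap ∘ₗ
    LinearMap.pi fun i => if deg i = k then LinearMap.proj i else 0

theorem blockNorm_eq_norm_blockProj (x : Fin N → ℝ) :
    blockNorm deg k x = ‖blockProj deg k x‖ := by
  rw [EuclideanSpace.norm_eq, blockNorm, Finset.sum_filter]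
  congr 1
  refine Finset.sum_congr rfl fun i _ => ?_
  split_ifs with h <;> simp [blockProj, h]

theorem blockNorm_nonneg (x : Fin N → ℝ) : 0 ≤ blockNorm deg k x := Real.sqrt_nonneg _

theorem blockNorm_neg (x : Fin N → ℝ) : blockNorm deg k (-x) = blockNorm deg k x := by
  simp only [blockNorm_eq_norm_blockProj, map_neg, norm_neg]

theorem blockNorm_add_le (x y : Fin N → ℝ) :
    blockNorm deg k (x + y) ≤ blockNorm deg k x + blockNorm deg k y := by
  simp only [blockNorm_eq_norm_blockProj, map_add]
  exact norm_add_le _ _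

theorem abs_le_blockNorm (x : Fin N → ℝ) (i : Fin N) : |x i| ≤ blockNorm deg (deg i) x := by
  simpa [blockNorm_eq_norm_blockProj, blockProj] using PiLp.norm_apply_le (blockProj deg (deg i) x) i

theorem blockNorm_le_sum_abs (x : Fin N → ℝ) :
    blockNorm deg k x ≤ ∑ i ∈ Finset.univ.filter (fun i => deg i = k), |x i| := by
  refine Real.sqrt_le_iff.mpr ⟨Finset.sum_nonneg fun i _ => abs_nonneg _, ?_⟩
  simpa only [sq_abs] using
    Finset.sum_sq_le_sq_sum_of_nonneg (f := fun i => |x i|) fun i _ => abs_nonneg _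

theorem blockNorm_le_sum_mul {x a : Fin N → ℝ} {t : ℝ} (ha : ∀ i, 0 ≤ a i) (ht : 0 ≤ t)
    (hx : ∀ i, deg i = k → |x i| ≤ a i * t) : blockNorm deg k x ≤ (∑ i, a i) * t := by
  calc blockNorm deg k x ≤ ∑ i ∈ Finset.univ.filter (fun i => deg i = k), |x i| :=
        blockNorm_le_sum_abs deg k x
    _ ≤ ∑ i ∈ Finset.univ.filter (fun i => deg i = k), a i * t :=
        Finset.sum_le_sum fun i hi => hx i (Finset.mem_filter.mp hi).2
    _ ≤ ∑ i, a i * t :=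
        Finset.sum_le_sum_of_subset_of_nonneg (Finset.filter_subset _ _)
          fun i _ _ => mul_nonneg (ha i) ht
    _ = (∑ i, a i) * t := Finset.sum_mul _ _ _ |>.symm

end BlockNorm

theorem rpow_one_div_le_iff {b c : ℝ} {k : ℕ} (hb : 0 ≤ b) (hc : 0 ≤ c) (hk : k ≠ 0) :
    b ^ ((1 : ℝ) / k) ≤ c ↔ b ≤ c ^ k := by
  rw [one_div, Real.rpow_inv_le_iff_of_pos hb hc (by positivity), Real.rpow_natCast]

section Quasimetric

variable {N M : ℕ} (hM : 1 ≤ M) (deg : Fin N → ℕ)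

theorem d2_zero_le_iff {w : Fin N → ℝ} {ρ : ℝ} (hρ : 0 ≤ ρ) :
    d2 M hM deg 0 w ≤ ρ ↔ ∀ k ∈ Finset.Icc 1 M, blockNorm deg k w ≤ ρ ^ k := by
  rw [d2, Finset.sup'_le_iff]
  refine forall₂_congr fun k hk => ?_
  rw [zero_sub, blockNorm_neg,
    rpow_one_div_le_iff (blockNorm_nonneg deg k w) hρ (by grind)]

theorem abs_le_pow_deg_of_d2_zero_le {w : Fin N → ℝ} {ρ : ℝ} {i : Fin N} (hρ : 0 ≤ ρ)
    (hi : deg i ∈ Finset.Icc 1 M) (hw : d2 M hM deg 0 w ≤ ρ) : |w i| ≤ ρ ^ deg i :=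
  (abs_le_blockNorm deg w i).trans ((d2_zero_le_iff hM deg hρ).mp hw _ hi)

end Quasimetric

section Monomials

variable {N : ℕ} {deg : Fin N → ℕ}

theorem abs_prod_pow_le {x : Fin N → ℝ} {ρ : ℝ} (hx : ∀ j, |x j| ≤ ρ ^ deg j)
    (μ : Fin N → ℕ) : |∏ j, x j ^ μ j| ≤ ρ ^ ∑ j, μ j * deg j := by
  rw [Finset.abs_prod, ← Finset.prod_pow_eq_pow_sum]
  refine Finset.prod_le_prod (fun j _ => abs_nonneg _) fun j _ => ?_
  rw [abs_pow, mul_comm, pow_mul]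
  exact pow_le_pow_left₀ (abs_nonneg _) (hx j) _

theorem pow_mul_pow_le_mul_add_pow {r ξ : ℝ} (hr : 0 ≤ r) (hξ : 0 ≤ ξ) (a : ℕ) {b : ℕ}
    (hb : 1 ≤ b) : r ^ a * ξ ^ b ≤ ξ * (r + ξ) ^ (a + b - 1) := by
  obtain ⟨b, rfl⟩ := Nat.exists_eq_add_of_le' hb
  calc r ^ a * ξ ^ (b + 1) = ξ * (r ^ a * ξ ^ b) := by ring
    _ ≤ ξ * ((r + ξ) ^ a * (r + ξ) ^ b) := by gcongr <;> linarith
    _ = ξ * (r + ξ) ^ (a + (b + 1) - 1) := by rw [← pow_add]; rfl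

theorem abs_sum_monomials_le {x z : Fin N → ℝ} {r ξ : ℝ} (hr : 0 ≤ r) (hξ : 0 ≤ ξ)
    (hx : ∀ j, |x j| ≤ r ^ deg j) (hz : ∀ j, |z j| ≤ ξ ^ deg j) {k : ℕ}
    {T : Finset ((Fin N → ℕ) × (Fin N → ℕ))} (c : (Fin N → ℕ) × (Fin N → ℕ) → ℝ)
    (hT : ∀ p ∈ T, (∑ j, p.1 j * deg j) + (∑ j, p.2 j * deg j) = k ∧
      1 ≤ ∑ j, p.2 j * deg j) :
    |∑ p ∈ T, c p * (∏ j, x j ^ p.1 j) * ∏ j, z j ^ p.2 j| ≤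
      (∑ p ∈ T, |c p|) * (ξ * (r + ξ) ^ (k - 1)) := by
  rw [Finset.sum_mul]
  refine (Finset.abs_sum_le_sum_abs _ _).trans (Finset.sum_le_sum fun p hp => ?_)
  obtain ⟨hdeg, hβ⟩ := hT p hp
  rw [abs_mul, abs_mul, mul_assoc, ← hdeg]
  refine mul_le_mul_of_nonneg_left ?_ (abs_nonneg _)
  calc |∏ j, x j ^ p.1 j| * |∏ j, z j ^ p.2 j|
      ≤ r ^ (∑ j, p.1 j * deg j) * ξ ^ (∑ j, p.2 j * deg j) :=
        mul_le_mul (abs_prod_pow_le hx _) (abs_prod_pow_le hz _) (abs_nonneg _) (by positivity)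
    _ ≤ _ := pow_mul_pow_le_mul_add_pow hr hξ _ hβ

end Monomials

theorem pow_add_pow_add_mul_le {r ξ K : ℝ} (hr : 0 ≤ r) (hξ : 0 ≤ ξ) (hK : 0 ≤ K) {k : ℕ}
    (hk : k ≠ 0) : r ^ k + ξ ^ k + K * (ξ * (r + ξ) ^ (k - 1)) ≤ (r + (K + 1) * ξ) ^ k := by
  obtain ⟨m, rfl⟩ := Nat.exists_eq_succ_of_ne_zero hk
  calc r ^ (m + 1) + ξ ^ (m + 1) + K * (ξ * (r + ξ) ^ (m + 1 - 1))
      ≤ (r + ξ) ^ (m + 1) + K * (ξ * (r + ξ) ^ m) := by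
        rw [Nat.add_sub_cancel]
        gcongr
        exact pow_add_pow_le hr hξ hk
    _ = (r + (K + 1) * ξ) * (r + ξ) ^ m := by ring
    _ ≤ (r + (K + 1) * ξ) * (r + (K + 1) * ξ) ^ m := by gcongr; nlinarith
    _ = (r + (K + 1) * ξ) ^ (m + 1) := by ring

/-- For a graded (Carnot) group product in exponential coordinates—each
coordinate of degree `k` being `x_i + y_i` plus a polynomial whose monomials
`x^μ y^β` satisfy `|μ|_h + |β|_h = k`, `μ, β > 0`—the union of `d₂`-balls of
radius `ξ` centered in the ball of radius `r` lies in the ball of radius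
`r + C·ξ`, for `r, ξ ≤ r₀`. -/
theorem stmt_18 {N M : ℕ} (hM : 1 ≤ M) (deg : Fin N → ℕ)
    (hdeg : ∀ i, 1 ≤ deg i ∧ deg i ≤ M)
    (mul : (Fin N → ℝ) → (Fin N → ℝ) → (Fin N → ℝ))
    (hmul : ∀ i : Fin N,
      ∃ (T : Finset ((Fin N → ℕ) × (Fin N → ℕ))) (c : (Fin N → ℕ) × (Fin N → ℕ) → ℝ),
        (∀ p ∈ T, (∑ j, p.1 j * deg j) + (∑ j, p.2 j * deg j) = deg i ∧
          1 ≤ ∑ j, p.1 j * deg j ∧ 1 ≤ ∑ j, p.2 j * deg j) ∧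
        ∀ x y : Fin N → ℝ, mul x y i =
          x i + y i + ∑ p ∈ T, c p * (∏ j, x j ^ p.1 j) * (∏ j, y j ^ p.2 j)) :
    ∃ C r₀ : ℝ, 0 < C ∧ 0 < r₀ ∧
      ∀ (x z : Fin N → ℝ) (r ξ : ℝ), 0 < r → 0 < ξ → r ≤ r₀ → ξ ≤ r₀ →
        d2 M hM deg 0 x ≤ r → d2 M hM deg 0 z ≤ ξ →
        d2 M hM deg 0 (mul x z) ≤ r + C * ξ := by
  choose T c hT hmul using hmul
  set K := ∑ i, ∑ p ∈ T i, |c i p|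
  have hK : 0 ≤ K := by positivity
  refine ⟨K + 1, 1, by positivity, one_pos, fun x z r ξ hr hξ _ _ hx hz => ?_⟩
  have hdegIcc i : deg i ∈ Finset.Icc 1 M := Finset.mem_Icc.mpr (hdeg i)
  have hxj j := abs_le_pow_deg_of_d2_zero_le hM deg hr.le (hdegIcc j) hx
  have hzj j := abs_le_pow_deg_of_d2_zero_le hM deg hξ.le (hdegIcc j) hz
  rw [d2_zero_le_iff hM deg hr.le] at hx
  rw [d2_zero_le_iff hM deg hξ.le] at hz
  rw [d2_zero_le_iff hM deg (by positivity)]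
  intro k hk
  set P : Fin N → ℝ := fun i => ∑ p ∈ T i, c i p * (∏ j, x j ^ p.1 j) * ∏ j, z j ^ p.2 j
  have hP : blockNorm deg k P ≤ K * (ξ * (r + ξ) ^ (k - 1)) :=
    blockNorm_le_sum_mul deg k (fun i => by positivity) (by positivity) fun i hi =>
      abs_sum_monomials_le hr.le hξ.le hxj hzj (c i) fun p hp =>
        ⟨(hT i p hp).1.trans hi, (hT i p hp).2.2⟩
  calc blockNorm deg k (mul x z) = blockNorm deg k (x + z + P) := by
        congr 1; funext i; exact hmul i x z
    _ ≤ blockNorm deg k x + blockNorm deg k z + blockNorm deg k P :=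
        (blockNorm_add_le deg k _ _).trans (add_le_add_left (blockNorm_add_le deg k x z) _)
    _ ≤ r ^ k + ξ ^ k + K * (ξ * (r + ξ) ^ (k - 1)) := by
        gcongr
        exacts [hx k hk, hz k hk]
    _ ≤ (r + (K + 1) * ξ) ^ k := pow_add_pow_add_mul_le hr.le hξ.le hK (by grind)
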